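/- arXiv:2008.04061 — 7 statements merged into one kernel-verified Lean document; each statement's English description precedes it below -/
import Mathlib

section
/- Let a, b, c be pairwise coprime positive integers. Then a² + b² + c² = 3abc if and only if c divides a² + b², a divides b² + c², and b divides c² + a². -/
/-- Descent step: for a sorted pairwise coprime positive solution of
`x²+y²+z² = k·x·y·z`, either `k = 3` or we can jump `z` down. -/
lemma markov_descent (k x y z : ℕ) (hx : 0 < x) (hy : 0 < y) (hz : 0 < z)
    (hxy : x ≤ y) (hyz : y ≤ z)
    (cxy : Nat.Coprime x y) (cyz : Nat.Coprime y z) (cxz : Nat.Coprime x z)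
    (heq : x ^ 2 + y ^ 2 + z ^ 2 = k * x * y * z) :
    k = 3 ∨ ∃ w, 0 < w ∧ w < z ∧ Nat.Coprime x w ∧ Nat.Coprime y w ∧
      x ^ 2 + y ^ 2 + w ^ 2 = k * x * y * w := by
  have h1 : z ∣ x ^ 2 + y ^ 2 + z ^ 2 := ⟨k * x * y, by rw [heq]; ring⟩
  have hzd : z ∣ x ^ 2 + y ^ 2 := by
    have h2 := Nat.dvd_sub h1 (dvd_pow_self z two_ne_zero)
    simpa using h2
  obtain ⟨w, hw⟩ := hzd
  have hw0 : 0 < w := by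
    rcases Nat.eq_zero_or_pos w with rfl | h
    · exfalso; rw [mul_zero] at hw
      have := pow_pos hx 2
      omega
    · exact h
  have hsum : z + w = k * x * y := by
    have hmul : z * (z + w) = z * (k * x * y) := by
      calc z * (z + w) = z ^ 2 + z * w := by ring
        _ = z ^ 2 + (x ^ 2 + y ^ 2) := by rw [← hw]
        _ = k * x * y * z := by linarith [heq]
        _ = z * (k * x * y) := by ring
    exact Nat.eq_of_mul_eq_mul_left hz hmul
  have heqw : x ^ 2 + y ^ 2 + w ^ 2 = k * x * y * w := by
    calc x ^ 2 + y ^ 2 + w ^ 2 = z * w + w ^ 2 := by rw [hw]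
      _ = w * (z + w) := by ring
      _ = w * (k * x * y) := by rw [hsum]
      _ = k * x * y * w := by ring
  -- coprimality is preserved
  have cxw : Nat.Coprime x w := by
    have hd1 : Nat.gcd x w ∣ z * w := Dvd.dvd.mul_left (Nat.gcd_dvd_right x w) z
    rw [← hw] at hd1
    have hd2 : Nat.gcd x w ∣ x ^ 2 := (Nat.gcd_dvd_left x w).trans (dvd_pow_self x two_ne_zero)
    have hd3 : Nat.gcd x w ∣ y ^ 2 := by
      have := Nat.dvd_sub hd1 hd2
      simpa using this
    have := Nat.dvd_gcd (Nat.gcd_dvd_left x w) hd3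
    rw [Nat.Coprime.gcd_eq_one (cxy.pow_right 2)] at this
    exact Nat.eq_one_of_dvd_one this
  have cyw : Nat.Coprime y w := by
    have hd1 : Nat.gcd y w ∣ z * w := Dvd.dvd.mul_left (Nat.gcd_dvd_right y w) z
    rw [← hw] at hd1
    have hd2 : Nat.gcd y w ∣ y ^ 2 := (Nat.gcd_dvd_left y w).trans (dvd_pow_self y two_ne_zero)
    have hd3 : Nat.gcd y w ∣ x ^ 2 := by
      have h4 : Nat.gcd y w ∣ x ^ 2 + y ^ 2 := hd1
      have := Nat.dvd_sub h4 hd2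
      simpa using this
    have := Nat.dvd_gcd (Nat.gcd_dvd_left y w) hd3
    rw [Nat.Coprime.gcd_eq_one ((cxy.symm).pow_right 2)] at this
    exact Nat.eq_one_of_dvd_one this
  rcases lt_or_ge w z with hwz | hzw
  · exact Or.inr ⟨w, hw0, hwz, cxw, cyw, heqw⟩
  · -- w ≥ z : the minimal case, show k = 3
    left
    have hyw : y ≤ w := le_trans hyz hzw
    -- 2 ≤ k*x
    have hkx2 : 2 ≤ k * x := by
      have h2y : 2 * y ≤ k * x * y := by
        calc 2 * y ≤ 2 * z := by omega
          _ ≤ z + w := by omega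
          _ = k * x * y := hsum
      exact Nat.le_of_mul_le_mul_right (by linarith [h2y]) hy
    rcases lt_or_ge (k * x) 3 with hkx | hkx
    · -- k*x = 2 : contradiction
      exfalso
      have hkxe : k * x = 2 := by omega
      have h2y : z + w = 2 * y := by rw [hsum, hkxe]
      have hyze : y = z ∧ w = z := by omega
      obtain ⟨hyze1, hwze⟩ := hyze
      have hz1 : z = 1 := by
        have h : Nat.gcd z z = 1 := hyze1 ▸ cyz
        rwa [Nat.gcd_self] at h
      rw [hz1, hwze, hz1] at hw
      have hx2 := pow_pos hx 2
      have hy2 := pow_pos hy 2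
      simp at hw
      omega
    · -- k*x ≥ 3
      have hineq : y * (z + w) ≤ z * w + y * y := by
        zify
        nlinarith [mul_nonneg (sub_nonneg.mpr (show (y : ℤ) ≤ z by exact_mod_cast hyz))
          (sub_nonneg.mpr (show (y : ℤ) ≤ w by exact_mod_cast hyw))]
      have e1 : k * x * (y * y) = y * (z + w) := by
        calc k * x * (y * y) = (k * x * y) * y := by ring
          _ = (z + w) * y := by rw [← hsum]
          _ = y * (z + w) := by ring
      have e2 : z * w + y * y = x ^ 2 + y ^ 2 + y * y := by rw [← hw]
      have h3y : 3 * (y * y) ≤ k * x * (y * y) := Nat.mul_le_mul_right _ hkx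
      -- so 3y² ≤ x² + 2y², hence y² ≤ x², hence x = y
      have chain : 3 * (y * y) ≤ x ^ 2 + y ^ 2 + y * y := by
        calc 3 * (y * y) ≤ k * x * (y * y) := h3y
          _ = y * (z + w) := e1
          _ ≤ z * w + y * y := hineq
          _ = x ^ 2 + y ^ 2 + y * y := e2
      have hxx : y ^ 2 ≤ x ^ 2 := by
        have hb : y * y = y ^ 2 := by ring
        linarith [chain, hb]
      have hyx : y ≤ x := by
        by_contra h
        push_neg at h
        have := Nat.pow_lt_pow_left h (n := 2) two_ne_zero
        omega
      have hxye : x = y := le_antisymm hxy hyx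
      have hy1 : y = 1 := by
        have h : Nat.gcd y y = 1 := hxye ▸ cxy
        rwa [Nat.gcd_self] at h
      -- now x = y = 1, z*w = 2, z ≤ w, z ≥ 1
      rw [hxye, hy1] at hw
      simp at hw  -- hw : 2 = z * w  (or similar)
      have hzz : z * z ≤ 2 := by
        calc z * z ≤ z * w := Nat.mul_le_mul_left z hzw
          _ = 2 := by omega
      have hz1 : z = 1 := by
        by_contra hzne
        have h2 : 2 ≤ z := by omega
        have h4 : 2 * 2 ≤ z * z := Nat.mul_le_mul h2 h2
        linarith [hzz, h4]
      have hw2 : w = 2 := by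
        rw [hz1] at hw; omega
      have := hsum
      rw [hz1, hw2, hxye, hy1] at this
      simpa using this.symm

/-- Any pairwise coprime positive solution of `x²+y²+z² = k·x·y·z` forces `k = 3`. -/
lemma markov_key (k : ℕ) : ∀ n x y z : ℕ, x + y + z ≤ n → 0 < x → 0 < y → 0 < z →
    Nat.Coprime x y → Nat.Coprime y z → Nat.Coprime x z →
    x ^ 2 + y ^ 2 + z ^ 2 = k * x * y * z → k = 3 := by
  intro n
  induction n with
  | zero => intro x y z hn hx hy hz _ _ _ _; omega
  | succ n ih =>
    intro x y z hn hx hy hz cxy cyz cxz heq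
    obtain ⟨p, q, r, hpq, hqr, hp, hq, hr, c1, c2, c3, heq', hsum⟩ :
        ∃ p q r : ℕ, p ≤ q ∧ q ≤ r ∧ 0 < p ∧ 0 < q ∧ 0 < r ∧
          Nat.Coprime p q ∧ Nat.Coprime q r ∧ Nat.Coprime p r ∧
          p ^ 2 + q ^ 2 + r ^ 2 = k * p * q * r ∧ p + q + r = x + y + z := by
      rcases le_total x y with h1 | h1 <;> rcases le_total y z with h2 | h2 <;>
        rcases le_total x z with h3 | h3
      · exact ⟨x, y, z, h1, h2, hx, hy, hz, cxy, cyz, cxz, heq, by omega⟩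
      · exact ⟨x, y, z, h1, h2, hx, hy, hz, cxy, cyz, cxz, heq, by omega⟩
      · exact ⟨x, z, y, h3, h2, hx, hz, hy, cxz, cyz.symm, cxy,
          by rw [show k * x * z * y = k * x * y * z from by ring]; linarith [heq], by omega⟩
      · exact ⟨z, x, y, h3, h1, hz, hx, hy, cxz.symm, cxy, cyz.symm,
          by rw [show k * z * x * y = k * x * y * z from by ring]; linarith [heq], by omega⟩
      · exact ⟨y, x, z, h1, h3, hy, hx, hz, cxy.symm, cxz, cyz,
          by rw [show k * y * x * z = k * x * y * z from by ring]; linarith [heq], by omega⟩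
      · exact ⟨y, z, x, h2, h3, hy, hz, hx, cyz, cxz.symm, cxy.symm,
          by rw [show k * y * z * x = k * x * y * z from by ring]; linarith [heq], by omega⟩
      · exact ⟨y, x, z, h1, h3, hy, hx, hz, cxy.symm, cxz, cyz,
          by rw [show k * y * x * z = k * x * y * z from by ring]; linarith [heq], by omega⟩
      · exact ⟨z, y, x, h2, h1, hz, hy, hx, cyz.symm, cxy.symm, cxz.symm,
          by rw [show k * z * y * x = k * x * y * z from by ring]; linarith [heq], by omega⟩
    rcases markov_descent k p q r hp hq hr hpq hqr c1 c2 c3 heq' with h | ⟨w, hw0, hwr, cpw, cqw, heqw⟩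
    · exact h
    · exact ih p q w (by omega) hp hq hw0 c1 cqw cpw heqw

theorem markov_iff_divisibility (a b c : ℕ) (ha : 0 < a) (hb : 0 < b) (hc : 0 < c)
    (hab : Nat.Coprime a b) (hbc : Nat.Coprime b c) (hca : Nat.Coprime c a) :
    a ^ 2 + b ^ 2 + c ^ 2 = 3 * a * b * c ↔
      c ∣ a ^ 2 + b ^ 2 ∧ a ∣ b ^ 2 + c ^ 2 ∧ b ∣ c ^ 2 + a ^ 2 := by
  constructor
  · intro h
    refine ⟨?_, ?_, ?_⟩
    · have h1 : c ∣ a ^ 2 + b ^ 2 + c ^ 2 := ⟨3 * a * b, by rw [h]; ring⟩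
      have := Nat.dvd_sub h1 (dvd_pow_self c two_ne_zero)
      simpa using this
    · have h1 : a ∣ b ^ 2 + c ^ 2 + a ^ 2 :=
        ⟨3 * b * c, by rw [show b ^ 2 + c ^ 2 + a ^ 2 = a ^ 2 + b ^ 2 + c ^ 2 from by ring, h]; ring⟩
      have := Nat.dvd_sub h1 (dvd_pow_self a two_ne_zero)
      simpa using this
    · have h1 : b ∣ c ^ 2 + a ^ 2 + b ^ 2 :=
        ⟨3 * c * a, by rw [show c ^ 2 + a ^ 2 + b ^ 2 = a ^ 2 + b ^ 2 + c ^ 2 from by ring, h]; ring⟩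
      have := Nat.dvd_sub h1 (dvd_pow_self b two_ne_zero)
      simpa using this
  · rintro ⟨hC, hA, hB⟩
    have hda : a ∣ a ^ 2 + b ^ 2 + c ^ 2 := by
      have := dvd_add (dvd_pow_self a two_ne_zero) hA
      rwa [← add_assoc] at this
    have hdb : b ∣ a ^ 2 + b ^ 2 + c ^ 2 := by
      have := dvd_add (dvd_pow_self b two_ne_zero) hB
      rwa [show b ^ 2 + (c ^ 2 + a ^ 2) = a ^ 2 + b ^ 2 + c ^ 2 from by ring] at this
    have hdc : c ∣ a ^ 2 + b ^ 2 + c ^ 2 := by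
      have := dvd_add (dvd_pow_self c two_ne_zero) hC
      rwa [show c ^ 2 + (a ^ 2 + b ^ 2) = a ^ 2 + b ^ 2 + c ^ 2 from by ring] at this
    have hdab : a * b ∣ a ^ 2 + b ^ 2 + c ^ 2 := hab.mul_dvd_of_dvd_of_dvd hda hdb
    have cabc : Nat.Coprime (a * b) c := Nat.Coprime.mul hca.symm hbc
    have habc : a * b * c ∣ a ^ 2 + b ^ 2 + c ^ 2 := cabc.mul_dvd_of_dvd_of_dvd hdab hdc
    obtain ⟨k, hk⟩ := habc
    have heqk : a ^ 2 + b ^ 2 + c ^ 2 = k * a * b * c := by rw [hk]; ring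
    have hk3 : k = 3 := markov_key k (a + b + c) a b c le_rfl ha hb hc hab hbc hca.symm heqk
    rw [heqk, hk3]
end

section
/- Let f be a polynomial in three variables with integer coefficients, and let (a, b, c) be a triple of pairwise coprime positive integers. Then a² + b² + c² = abc · f(a, b, c) if and only if a² + b² + c² = 3abc and f(a, b, c) = 3. -/
-- Descent lemma, sorted case
lemma markov_sorted_step (k : ℤ) (hk : 4 ≤ k) (n : ℕ)
    (IH : ∀ x y z : ℤ, 0 < x → 0 < y → 0 < z → x + y + z ≤ (n : ℤ) →
      x ^ 2 + y ^ 2 + z ^ 2 ≠ k * x * y * z)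
    (x y z : ℤ) (hx : 0 < x) (hy : 0 < y) (hz : 0 < z)
    (hxy : x ≤ y) (hyz : y ≤ z) (hsum : x + y + z ≤ (n : ℤ) + 1)
    (heq : x ^ 2 + y ^ 2 + z ^ 2 = k * x * y * z) : False := by
  have hprod : (k * x * y - z) * z = x ^ 2 + y ^ 2 := by linear_combination -heq
  have hwpos : 0 < k * x * y - z := by nlinarith [mul_pos hx hx, mul_pos hy hy]
  by_cases hlt : k * x * y - z < z
  · exact IH x y (k * x * y - z) hx hy hwpos (by linarith)
      (by linear_combination heq)
  · push_neg at hlt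
    have hz2 : z ^ 2 ≤ x ^ 2 + y ^ 2 := by nlinarith [mul_le_mul_of_nonneg_right hlt hz.le]
    have hkx : k * x ≤ 4 := by
      nlinarith [mul_pos hy hz, mul_le_mul_of_nonneg_left hyz hy.le,
        mul_le_mul_of_nonneg_right hxy hx.le]
    have hx1 : x = 1 := by nlinarith
    have hk4 : k = 4 := by nlinarith
    subst hx1 hk4
    have hyz1 : y * z ≤ 1 := by nlinarith [mul_le_mul_of_nonneg_left hyz hy.le]
    have hy1 : y = 1 := by nlinarith [mul_le_mul_of_nonneg_left hz hy.le]
    have hz1 : z = 1 := by nlinarith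
    subst hy1 hz1
    norm_num at heq

lemma markov_no_big (k : ℤ) (hk : 4 ≤ k) :
    ∀ n : ℕ, ∀ x y z : ℤ, 0 < x → 0 < y → 0 < z → x + y + z ≤ (n : ℤ) →
      x ^ 2 + y ^ 2 + z ^ 2 ≠ k * x * y * z := by
  intro n
  induction n with
  | zero => intro x y z hx hy hz hsum _; norm_num at hsum; linarith
  | succ n IH =>
    intro x y z hx hy hz hsum heq
    push_cast at hsum
    rcases le_total x y with h1 | h1 <;> rcases le_total y z with h2 | h2 <;>
      rcases le_total x z with h3 | h3
    · exact markov_sorted_step k hk n IH x y z hx hy hz h1 h2 hsum heq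
    · exact markov_sorted_step k hk n IH x y z hx hy hz h1 h2 hsum heq
    · exact markov_sorted_step k hk n IH x z y hx hz hy h3 h2 (by linarith)
        (by linear_combination heq)
    · exact markov_sorted_step k hk n IH z x y hz hx hy h3 h1 (by linarith)
        (by linear_combination heq)
    · exact markov_sorted_step k hk n IH y x z hy hx hz h1 h3 (by linarith)
        (by linear_combination heq)
    · exact markov_sorted_step k hk n IH y z x hy hz hx h2 h3 (by linarith)
        (by linear_combination heq)
    · exact markov_sorted_step k hk n IH z y x hz hy hx h2 h1 (by linarith)
        (by linear_combination heq)
    · exact markov_sorted_step k hk n IH z y x hz hy hx h2 h1 (by linarith)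
        (by linear_combination heq)

lemma coprime_no_common_three (x y : ℤ) (h : IsCoprime x y)
    (hdx : (3:ℤ) ∣ x) (hdy : (3:ℤ) ∣ y) : False := by
  have := h.isUnit_of_dvd' hdx hdy
  rw [Int.isUnit_iff] at this
  omega

lemma zmod3_sq_sum : ∀ u v : ZMod 3, u ^ 2 + v ^ 2 = 0 → u = 0 ∧ v = 0 := by decide

lemma zmod3_sq_one : ∀ u : ZMod 3, u ≠ 0 → u ^ 2 = 1 := by decide

theorem diophantine_iff_markov_and_f_eq_three (f : MvPolynomial (Fin 3) ℤ)
    (a b c : ℤ) (ha : 0 < a) (hb : 0 < b) (hc : 0 < c)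
    (hab : IsCoprime a b) (hbc : IsCoprime b c) (hca : IsCoprime c a) :
    a ^ 2 + b ^ 2 + c ^ 2 = a * b * c * MvPolynomial.eval ![a, b, c] f ↔
      (a ^ 2 + b ^ 2 + c ^ 2 = 3 * a * b * c ∧ MvPolynomial.eval ![a, b, c] f = 3) := by
  set k : ℤ := MvPolynomial.eval ![a, b, c] f with hkdef
  constructor
  · intro heq
    have habc : 0 < a * b * c := mul_pos (mul_pos ha hb) hc
    have hkpos : 0 < k := by nlinarith [sq_nonneg a, sq_nonneg b, sq_nonneg c]
    -- none of a, b, c divisible by 3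
    have h3a : ¬ (3:ℤ) ∣ a := by
      rintro ⟨t, rfl⟩
      have hd : (3:ℤ) ∣ b ^ 2 + c ^ 2 := ⟨t * b * c * k - 3 * t ^ 2, by linear_combination heq⟩
      have hcast : ((b : ZMod 3)) ^ 2 + (c : ZMod 3) ^ 2 = 0 := by
        have := (ZMod.intCast_zmod_eq_zero_iff_dvd (b ^ 2 + c ^ 2) 3).mpr hd
        push_cast at this
        exact this
      obtain ⟨hb0, hc0⟩ := zmod3_sq_sum _ _ hcast
      exact coprime_no_common_three b c hbc
        ((ZMod.intCast_zmod_eq_zero_iff_dvd b 3).mp hb0)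
        ((ZMod.intCast_zmod_eq_zero_iff_dvd c 3).mp hc0)
    have h3b : ¬ (3:ℤ) ∣ b := by
      rintro ⟨t, rfl⟩
      have hd : (3:ℤ) ∣ a ^ 2 + c ^ 2 := ⟨a * t * c * k - 3 * t ^ 2, by linear_combination heq⟩
      have hcast : ((a : ZMod 3)) ^ 2 + (c : ZMod 3) ^ 2 = 0 := by
        have := (ZMod.intCast_zmod_eq_zero_iff_dvd (a ^ 2 + c ^ 2) 3).mpr hd
        push_cast at this
        exact this
      obtain ⟨ha0, hc0⟩ := zmod3_sq_sum _ _ hcast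
      exact coprime_no_common_three c a hca
        ((ZMod.intCast_zmod_eq_zero_iff_dvd c 3).mp hc0)
        ((ZMod.intCast_zmod_eq_zero_iff_dvd a 3).mp ha0)
    have h3c : ¬ (3:ℤ) ∣ c := by
      rintro ⟨t, rfl⟩
      have hd : (3:ℤ) ∣ a ^ 2 + b ^ 2 := ⟨a * b * t * k - 3 * t ^ 2, by linear_combination heq⟩
      have hcast : ((a : ZMod 3)) ^ 2 + (b : ZMod 3) ^ 2 = 0 := by
        have := (ZMod.intCast_zmod_eq_zero_iff_dvd (a ^ 2 + b ^ 2) 3).mpr hd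
        push_cast at this
        exact this
      obtain ⟨ha0, hb0⟩ := zmod3_sq_sum _ _ hcast
      exact coprime_no_common_three a b hab
        ((ZMod.intCast_zmod_eq_zero_iff_dvd a 3).mp ha0)
        ((ZMod.intCast_zmod_eq_zero_iff_dvd b 3).mp hb0)
    -- 3 divides k
    have ha' : (a : ZMod 3) ≠ 0 := fun h => h3a ((ZMod.intCast_zmod_eq_zero_iff_dvd a 3).mp h)
    have hb' : (b : ZMod 3) ≠ 0 := fun h => h3b ((ZMod.intCast_zmod_eq_zero_iff_dvd b 3).mp h)
    have hc' : (c : ZMod 3) ≠ 0 := fun h => h3c ((ZMod.intCast_zmod_eq_zero_iff_dvd c 3).mp h)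
    have hcast : ((a : ZMod 3)) ^ 2 + (b : ZMod 3) ^ 2 + (c : ZMod 3) ^ 2
        = (a : ZMod 3) * b * c * (k : ZMod 3) := by
      have := congrArg (fun t : ℤ => (t : ZMod 3)) heq
      push_cast at this
      exact this
    rw [zmod3_sq_one _ ha', zmod3_sq_one _ hb', zmod3_sq_one _ hc'] at hcast
    have hk0 : (k : ZMod 3) = 0 := by
      have h30 : (1 + 1 + 1 : ZMod 3) = 0 := by decide
      rw [h30] at hcast
      have := hcast.symm
      rcases mul_eq_zero.mp this with h | h
      · rcases mul_eq_zero.mp h with h | h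
        · rcases mul_eq_zero.mp h with h | h
          · exact absurd h ha'
          · exact absurd h hb'
        · exact absurd h hc'
      · exact h
    have h3k : (3:ℤ) ∣ k := (ZMod.intCast_zmod_eq_zero_iff_dvd k 3).mp hk0
    -- k < 4
    have hk4 : k < 4 := by
      by_contra h
      push_neg at h
      exact markov_no_big k h (a + b + c).toNat a b c ha hb hc
        (Int.self_le_toNat _) (by linear_combination heq)
    have hk3 : k = 3 := by omega
    exact ⟨by rw [hk3] at heq; linear_combination heq, hk3⟩
  · rintro ⟨h1, h2⟩
    rw [h2]
    linear_combination h1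
end

section
/- Let f be a polynomial in three variables with integer coefficients. If positive integers a, b, c satisfy a² + b² + c² = abc · f(a, b, c), then gcd(a, b, c) = 1 or gcd(a, b, c) = 3. -/
/-!
Dividing `a, b, c` by `d = gcd(a, b, c)` turns the equation into `x² + y² + z² = n x y z` with
`n = d · f(a, b, c)`, so it suffices to know Hurwitz's fact that this equation has positive
solutions only for `n = 1` and `n = 3`. That follows by Vieta jumping: replacing the largest
entry `x` by the other root `n y z - x` of the quadratic gives a smaller positive solution, and
at a solution where no jump decreases the sum, `n z ≤ 3` for the smallest entry `z`, which
leaves only `n ∈ {1, 3}` or `n = 2, z = 1`, and the latter reads `(x - y)² + 1 = 0`.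
-/

lemma vieta_jump {n x y z : ℤ} (hx : 0 < x) (hy : 0 < y)
    (h : x ^ 2 + y ^ 2 + z ^ 2 = n * x * y * z) :
    0 < n * y * z - x ∧ (n * y * z - x) ^ 2 + y ^ 2 + z ^ 2 = n * (n * y * z - x) * y * z := by
  have hprod : x * (n * y * z - x) = y ^ 2 + z ^ 2 := by linear_combination -h
  exact ⟨pos_of_mul_pos_right (hprod ▸ by positivity) hx.le, by linear_combination h⟩

lemma eq_one_or_three_of_le_vieta_jump {n x y z : ℤ} (hz : 0 < z) (hzy : z ≤ y) (hyx : y ≤ x)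
    (hjump : x ≤ n * y * z - x) (h : x ^ 2 + y ^ 2 + z ^ 2 = n * x * y * z) :
    n = 1 ∨ n = 3 := by
  have hy : 0 < y := hz.trans_le hzy
  have hx : 0 < x := hy.trans_le hyx
  have hn : 0 < n := by
    have : 0 < n * (x * y * z) := by nlinarith
    exact pos_of_mul_pos_left this (by positivity)
  -- `y ≤ x ≤ n y z - x` puts `y` outside the two roots of `t² - n y z t + y² + z²`.
  have hle : n * y ^ 2 * z ≤ 2 * y ^ 2 + z ^ 2 := by
    nlinarith [mul_nonneg (sub_nonneg.2 hyx) (sub_nonneg.2 (hyx.trans hjump))]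
  have hnz : n * z ≤ 3 := by nlinarith [sq_nonneg y]
  have hn2 : z = 1 → n ≠ 2 := by rintro rfl rfl; nlinarith [sq_nonneg (x - y)]
  have hn3 : n ≤ 3 := by nlinarith
  interval_cases n <;> omega

lemma eq_one_or_three_of_sq_add_sq_add_sq_eq_mul_of_add_le (n : ℤ) (s : ℕ) :
    ∀ x y z : ℤ, 0 < x → 0 < y → 0 < z → x + y + z ≤ s →
      x ^ 2 + y ^ 2 + z ^ 2 = n * x * y * z → n = 1 ∨ n = 3 := by
  induction s with
  | zero => intro x y z hx hy hz hs _; omega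
  | succ s ih =>
    intro x y z hx hy hz hs h
    wlog hyx : y ≤ x generalizing x y
    · exact this (x := y) (y := x) (hx := hy) (hy := hx) (hs := by omega)
        (h := by linear_combination h) (hyx := by omega)
    wlog hzx : z ≤ x generalizing x y z
    · exact this (x := z) (y := y) (z := x) (hx := hz) (hy := hy) (hz := hx) (hs := by omega)
        (h := by linear_combination h) (hyx := by omega) (hzx := by omega)
    wlog hzy : z ≤ y generalizing y z
    · exact this (y := z) (z := y) (hy := hz) (hz := hy) (hs := by omega)
        (h := by linear_combination h) (hyx := by omega) (hzx := by omega) (hzy := by omega)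
    obtain ⟨hpos, hsol⟩ := vieta_jump hx hy h
    rcases lt_or_ge (n * y * z - x) x with hlt | hge
    · exact ih _ y z hpos hy hz (by push_cast at hs; omega) hsol
    · exact eq_one_or_three_of_le_vieta_jump hz hzy hyx hge h

theorem eq_one_or_three_of_sq_add_sq_add_sq_eq_mul {n x y z : ℤ} (hx : 0 < x) (hy : 0 < y)
    (hz : 0 < z) (h : x ^ 2 + y ^ 2 + z ^ 2 = n * x * y * z) : n = 1 ∨ n = 3 :=
  eq_one_or_three_of_sq_add_sq_add_sq_eq_mul_of_add_le n (x + y + z).toNat x y z hx hy hz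
    (by omega) h

theorem gcd_eq_one_or_three (f : MvPolynomial (Fin 3) ℤ)
    (a b c : ℤ) (ha : 0 < a) (hb : 0 < b) (hc : 0 < c)
    (h : a ^ 2 + b ^ 2 + c ^ 2 = a * b * c * MvPolynomial.eval ![a, b, c] f) :
    Int.gcd a (Int.gcd b c) = 1 ∨ Int.gcd a (Int.gcd b c) = 3 := by
  have hd : 0 < Int.gcd a (Int.gcd b c) := Int.gcd_pos_of_ne_zero_left _ ha.ne'
  have hda : (Int.gcd a (Int.gcd b c) : ℤ) ∣ a := Int.gcd_dvd_left _ _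
  have hdb : (Int.gcd a (Int.gcd b c) : ℤ) ∣ b :=
    (Int.gcd_dvd_right _ _).trans (Int.gcd_dvd_left _ _)
  have hdc : (Int.gcd a (Int.gcd b c) : ℤ) ∣ c :=
    (Int.gcd_dvd_right _ _).trans (Int.gcd_dvd_right _ _)
  generalize Int.gcd a (Int.gcd b c) = d at *
  obtain ⟨x, rfl⟩ := hda
  obtain ⟨y, rfl⟩ := hdb
  obtain ⟨z, rfl⟩ := hdc
  set k := MvPolynomial.eval ![d * x, d * y, d * z] f
  have hd' : (0 : ℤ) < d := by exact_mod_cast hd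
  have hreduced : x ^ 2 + y ^ 2 + z ^ 2 = d * k * x * y * z :=
    mul_left_cancel₀ (pow_ne_zero 2 hd'.ne') (by linear_combination h)
  have hdk : d * k = 1 ∨ d * k = 3 := eq_one_or_three_of_sq_add_sq_add_sq_eq_mul
    (pos_of_mul_pos_right ha hd'.le) (pos_of_mul_pos_right hb hd'.le)
    (pos_of_mul_pos_right hc hd'.le) hreduced
  have hd3 : d ∣ 3 := by
    rw [← Int.natCast_dvd_natCast]
    rcases hdk with h1 | h3
    · exact (Dvd.intro _ h1).trans (by norm_num)
    · exact Dvd.intro _ h3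
  exact (Nat.dvd_prime Nat.prime_three).1 hd3
end

section
/- Let g be a nonzero polynomial in three variables with nonnegative integer coefficients. Then there exist no positive integers a, b, c with gcd(a, b, c) = 1 satisfying a² + b² + c² = abc · (3 + g(a, b, c)). -/
lemma no_sol_k (k : ℤ) (hk : 4 ≤ k) :
    ∀ n : ℕ, ∀ a b c : ℤ, 0 < a → 0 < b → 0 < c → a ≤ b → b ≤ c →
      (a + b + c).toNat ≤ n → a ^ 2 + b ^ 2 + c ^ 2 ≠ k * (a * b * c) := by
  intro n
  induction n with
  | zero => intro a b c ha hb hc _ _ hn _; omega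
  | succ n ih =>
    intro a b c ha hb hc hab hbc hn heq
    by_cases hcase : c ^ 2 ≤ a ^ 2 + b ^ 2
    · have h4 : k * a ≤ 4 := by nlinarith [mul_pos hb hc, mul_le_mul_of_nonneg_left hab ha.le, mul_le_mul_of_nonneg_left hab hb.le, mul_le_mul_of_nonneg_left hbc (by positivity : (0:ℤ) ≤ 4 * b)]
      have hka : k ≤ k * a := le_mul_of_one_le_right (by linarith) ha
      have hk4 : k = 4 := by omega
      have ha1 : a = 1 := by nlinarith
      subst hk4; subst ha1
      have hble : b ≤ 1 := by nlinarith [mul_le_mul_of_nonneg_left hbc (by positivity : (0:ℤ) ≤ 4 * b)]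
      have hb1 : b = 1 := le_antisymm hble hb
      subst hb1
      have hc2 : 2 * c ≤ 3 := by nlinarith [sq_nonneg (c - 1)]
      have hc1 : c = 1 := by omega
      subst hc1
      norm_num at heq
    · push_neg at hcase
      set c' := k * a * b - c with hc'
      have hcc : c' * c = a ^ 2 + b ^ 2 := by
        rw [hc']; nlinarith
      have hc'pos : 0 < c' := by
        by_contra h
        push_neg at h
        nlinarith
      have hc'lt : c' < c := by nlinarith
      have heq' : a ^ 2 + b ^ 2 + c' ^ 2 = k * (a * b * c') := by
        have h1 : c' = k * a * b - c := hc'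
        nlinarith [hcc, h1]
      rcases le_total c' a with h1 | h1
      · exact ih c' a b hc'pos ha hb h1 hab (by omega) (by linarith)
      · rcases le_total c' b with h2 | h2
        · exact ih a c' b ha hc'pos hb h1 h2 (by omega) (by linarith)
        · exact ih a b c' ha hb hc'pos hab h2 (by omega) (by linarith)

lemma eval_one_le (g : MvPolynomial (Fin 3) ℤ)
    (hg : ∀ m, 0 ≤ MvPolynomial.coeff m g) (hne : g ≠ 0)
    (v : Fin 3 → ℤ) (hv : ∀ i, 1 ≤ v i) : 1 ≤ MvPolynomial.eval v g := by
  rw [MvPolynomial.eval_eq]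
  obtain ⟨m, hm⟩ := MvPolynomial.ne_zero_iff.mp hne
  have hmem : m ∈ g.support := MvPolynomial.mem_support_iff.mpr hm
  have hterm : 1 ≤ MvPolynomial.coeff m g * ∏ i ∈ m.support, v i ^ m i := by
    have h1 : 1 ≤ MvPolynomial.coeff m g := by
      have := hg m; omega
    have h2 : 1 ≤ ∏ i ∈ m.support, v i ^ m i := by
      have := Finset.prod_le_prod (s := m.support) (f := fun _ => (1:ℤ))
        (g := fun i => v i ^ m i) (fun i _ => zero_le_one) (fun i _ => one_le_pow₀ (hv i))
      simpa using this
    have := mul_le_mul h1 h2 zero_le_one (by linarith)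
    linarith
  calc (1:ℤ) ≤ MvPolynomial.coeff m g * ∏ i ∈ m.support, v i ^ m i := hterm
    _ ≤ ∑ d ∈ g.support, MvPolynomial.coeff d g * ∏ i ∈ d.support, v i ^ d i := by
        apply Finset.single_le_sum (fun d _ => ?_) hmem
        have h2 : (0:ℤ) ≤ ∏ i ∈ d.support, v i ^ d i :=
          Finset.prod_nonneg fun i _ => pow_nonneg (by linarith [hv i]) _
        exact mul_nonneg (hg d) h2

theorem no_solution_gcd_one (g : MvPolynomial (Fin 3) ℤ)
    (hg_nonneg : ∀ m, 0 ≤ MvPolynomial.coeff m g) (hg_ne : g ≠ 0) :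
    ¬ ∃ a b c : ℤ, 0 < a ∧ 0 < b ∧ 0 < c ∧ Int.gcd a (Int.gcd b c) = 1 ∧
      a ^ 2 + b ^ 2 + c ^ 2 = a * b * c * (3 + MvPolynomial.eval ![a, b, c] g) := by
  rintro ⟨a, b, c, ha, hb, hc, -, heq⟩
  set k := 3 + MvPolynomial.eval ![a, b, c] g with hkdef
  have hk : 4 ≤ k := by
    have := eval_one_le g hg_nonneg hg_ne ![a, b, c] (by
      intro i; fin_cases i <;> simp <;> omega)
    omega
  have heq2 : a ^ 2 + b ^ 2 + c ^ 2 = k * (a * b * c) := by linarith [heq]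
  have key := no_sol_k k hk (a + b + c).toNat
  rcases le_total a b with h1 | h1 <;> rcases le_total b c with h2 | h2 <;>
    rcases le_total a c with h3 | h3
  · exact key a b c ha hb hc h1 h2 (by omega) heq2
  · exact key a b c ha hb hc h1 h2 (by omega) heq2
  · exact key a c b ha hc hb h3 h2 (by omega) (by linarith)
  · exact key c a b hc ha hb h3 h1 (by omega) (by linarith)
  · exact key b a c hb ha hc h1 h3 (by omega) (by linarith)
  · exact key b c a hb hc ha h2 h3 (by omega) (by linarith)
  · exact key c b a hc hb ha h2 h1 (by omega) (by linarith)
  · exact key c b a hc hb ha h2 h1 (by omega) (by linarith)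
end

section
/- Let g be a polynomial in three variables with nonnegative integer coefficients which is not identically equal to the constant polynomial 1. Then there exist no positive integers a, b, c with gcd(a, b, c) = 3 satisfying a² + b² + c² = abc · g(a, b, c). -/
/-!
Writing `(a, b, c) = 3 (x, y, z)` and `t = g(a, b, c) ≥ 0`, the equation becomes
`x² + y² + z² = 3t · xyz`. Since `a, b, c ≥ 3` and `g` has nonnegative integer coefficients,
`g(a, b, c) = 1` only for `g = 1`, so `t ≥ 2`. But the Markov–Hurwitz equation
`x² + y² + z² = k xyz` has no positive solutions for `k ≥ 5`: Vieta jumping on the largest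
variable, `z ↦ kxy - z`, produces a positive solution with a smaller sum.
-/

namespace MvPolynomial

variable {σ R : Type*}

section OrderedSemiring

variable [CommSemiring R] [PartialOrder R] [IsOrderedRing R] {f : MvPolynomial σ R} {x : σ → R}

theorem eval_nonneg_of_coeff_nonneg (hf : ∀ d, 0 ≤ f.coeff d) (hx : ∀ i, 0 ≤ x i) :
    0 ≤ eval x f :=
  Finset.sum_nonneg fun d _ ↦
    mul_nonneg (hf d) (Finset.prod_nonneg fun i _ ↦ pow_nonneg (hx i) _)

theorem coeff_mul_prod_pow_le_eval (hf : ∀ d, 0 ≤ f.coeff d) (hx : ∀ i, 0 ≤ x i)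
    (d : σ →₀ ℕ) : f.coeff d * ∏ i ∈ d.support, x i ^ d i ≤ eval x f := by
  by_cases hd : d ∈ f.support
  · rw [eval_eq]
    exact Finset.single_le_sum (f := fun d ↦ f.coeff d * ∏ i ∈ d.support, x i ^ d i)
      (fun d _ ↦ mul_nonneg (hf d) (Finset.prod_nonneg fun i _ ↦ pow_nonneg (hx i) _)) hd
  · rw [notMem_support_iff.mp hd, zero_mul]
    exact eval_nonneg_of_coeff_nonneg hf hx

theorem le_prod_pow_of_mem_support (hx : ∀ i, 1 ≤ x i) {d : σ →₀ ℕ} {i : σ}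
    (hi : i ∈ d.support) :
    x i ≤ ∏ j ∈ d.support, x j ^ d j :=
  calc x i ≤ x i ^ d i := le_self_pow₀ (hx i) (Finsupp.mem_support_iff.mp hi)
    _ = ∏ j ∈ {i}, x j ^ d j := (Finset.prod_singleton _ _).symm
    _ ≤ ∏ j ∈ d.support, x j ^ d j :=
      Finset.prod_le_prod_of_subset_of_one_le (Finset.singleton_subset_iff.mpr hi)
        (fun j _ ↦ pow_nonneg (zero_le_one.trans (hx j)) _) (fun j _ _ ↦ one_le_pow₀ (hx j))

end OrderedSemiring

theorem eq_one_of_eval_eq_one {f : MvPolynomial σ ℤ} (hf : ∀ d, 0 ≤ f.coeff d) {x : σ → ℤ}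
    (hx : ∀ i, 2 ≤ x i) (h : eval x f = 1) : f = 1 := by
  have hx₀ : ∀ i, 0 ≤ x i := fun i ↦ by linarith [hx i]
  -- a nonconstant monomial alone would already contribute at least `2` to `eval x f = 1`
  have hcoeff : ∀ d ≠ 0, f.coeff d = 0 := by
    intro d hd
    by_contra hne
    obtain ⟨i, hi⟩ := Finsupp.support_nonempty_iff.mpr hd
    have hmon : 2 ≤ ∏ j ∈ d.support, x j ^ d j :=
      (hx i).trans (le_prod_pow_of_mem_support (fun j ↦ by linarith [hx j]) hi)
    have hterm := coeff_mul_prod_pow_le_eval hf hx₀ d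
    nlinarith [lt_of_le_of_ne (hf d) (Ne.symm hne)]
  have hconst : f = C (f.coeff 0) := by
    classical
    ext d
    rw [coeff_C]
    split_ifs with hd
    · rw [hd]
    · exact hcoeff d (Ne.symm hd)
  rw [hconst, eval_C] at h
  rw [hconst, h, C_1]

end MvPolynomial

def IsMarkovHurwitzTriple (k x y z : ℤ) : Prop :=
  0 < x ∧ 0 < y ∧ 0 < z ∧ x ^ 2 + y ^ 2 + z ^ 2 = k * x * y * z

namespace IsMarkovHurwitzTriple

variable {k x y z : ℤ}

theorem swap_right (h : IsMarkovHurwitzTriple k x y z) : IsMarkovHurwitzTriple k x z y := by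
  obtain ⟨hx, hy, hz, h⟩ := h
  exact ⟨hx, hz, hy, by linear_combination h⟩

theorem rotate (h : IsMarkovHurwitzTriple k x y z) : IsMarkovHurwitzTriple k y z x := by
  obtain ⟨hx, hy, hz, h⟩ := h
  exact ⟨hy, hz, hx, by linear_combination h⟩

theorem coeff_pos (h : IsMarkovHurwitzTriple k x y z) : 0 < k := by
  obtain ⟨hx, hy, hz, h⟩ := h
  have hxyz : 0 < x * y * z := by positivity
  nlinarith [sq_nonneg y, sq_nonneg z, mul_pos hx hx]

/-- Vieta jumping: `z` and `k x y - z` are the two roots of `Z² - k x y Z + x² + y²`. -/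
theorem vieta_jump (h : IsMarkovHurwitzTriple k x y z) (hk : 5 ≤ k) (hxz : x ≤ z)
    (hyz : y ≤ z) : ∃ z' < z, IsMarkovHurwitzTriple k x y z' := by
  obtain ⟨hx, hy, hz, h⟩ := h
  have hprod : z * (k * x * y - z) = x ^ 2 + y ^ 2 := by linear_combination -h
  refine ⟨k * x * y - z, ?_, hx, hy, ?_, by linear_combination h⟩
  · by_contra! hle
    -- then `k x y z ≤ 2 (x² + y²) ≤ 2 z (x + y) ≤ 4 x y z`
    have hsq : z ^ 2 ≤ x ^ 2 + y ^ 2 := by nlinarith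
    have hkxy : k * x * y ≤ 2 * (x + y) := by
      nlinarith [mul_le_mul_of_nonneg_left hxz hx.le, mul_le_mul_of_nonneg_left hyz hy.le]
    nlinarith [mul_pos hx hy]
  · nlinarith [sq_nonneg y, mul_pos hx hx]

theorem exists_sum_lt (h : IsMarkovHurwitzTriple k x y z) (hk : 5 ≤ k) :
    ∃ x' y' z', IsMarkovHurwitzTriple k x' y' z' ∧ x' + y' + z' < x + y + z := by
  by_cases hz : x ≤ z ∧ y ≤ z
  · obtain ⟨z', hz', h'⟩ := h.vieta_jump hk hz.1 hz.2
    exact ⟨x, y, z', h', by omega⟩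
  by_cases hy : x ≤ y ∧ z ≤ y
  · obtain ⟨y', hy', h'⟩ := h.swap_right.vieta_jump hk hy.1 hy.2
    exact ⟨x, z, y', h', by omega⟩
  obtain ⟨x', hx', h'⟩ := h.rotate.vieta_jump hk (by omega) (by omega)
  exact ⟨y, z, x', h', by omega⟩

theorem not_of_five_le (hk : 5 ≤ k) : ¬ IsMarkovHurwitzTriple k x y z := by
  induction hn : (x + y + z).toNat using Nat.strong_induction_on generalizing x y z with
  | _ n ih =>
    intro h
    obtain ⟨x', y', z', h', hlt⟩ := h.exists_sum_lt hk
    have ⟨hx', hy', hz', _⟩ := h'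
    exact ih _ (by omega) rfl h'

end IsMarkovHurwitzTriple

theorem no_solution_gcd_three (g : MvPolynomial (Fin 3) ℤ)
    (hg_nonneg : ∀ m, 0 ≤ MvPolynomial.coeff m g) (hg_ne : g ≠ 1) :
    ¬ ∃ a b c : ℤ, 0 < a ∧ 0 < b ∧ 0 < c ∧ Int.gcd a (Int.gcd b c) = 3 ∧
      a ^ 2 + b ^ 2 + c ^ 2 = a * b * c * MvPolynomial.eval ![a, b, c] g := by
  rintro ⟨a, b, c, ha, hb, hc, hgcd, heq⟩
  obtain ⟨⟨x, rfl⟩, ⟨y, rfl⟩, ⟨z, rfl⟩⟩ :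
      ((3 : ℕ) : ℤ) ∣ a ∧ ((3 : ℕ) : ℤ) ∣ b ∧ ((3 : ℕ) : ℤ) ∣ c := by
    rw [← hgcd]
    exact ⟨Int.gcd_dvd_left .., (Int.gcd_dvd_right ..).trans (Int.gcd_dvd_left ..),
      (Int.gcd_dvd_right ..).trans (Int.gcd_dvd_right ..)⟩
  simp only [Nat.cast_ofNat] at ha hb hc heq
  set t := MvPolynomial.eval ![3 * x, 3 * y, 3 * z] g
  have hv : ∀ i, 2 ≤ ![3 * x, 3 * y, 3 * z] i := by
    intro i; fin_cases i <;> simp <;> omega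
  have ht₀ : 0 ≤ t :=
    MvPolynomial.eval_nonneg_of_coeff_nonneg hg_nonneg fun i ↦ by linarith [hv i]
  have ht₁ : t ≠ 1 := fun h ↦ hg_ne (MvPolynomial.eq_one_of_eval_eq_one hg_nonneg hv h)
  have htriple : IsMarkovHurwitzTriple (3 * t) x y z :=
    ⟨by omega, by omega, by omega, mul_left_cancel₀ (by norm_num : (9 : ℤ) ≠ 0)
      (by linear_combination heq)⟩
  exact IsMarkovHurwitzTriple.not_of_five_le (by have := htriple.coeff_pos; omega) htriple
end

section
/- Let a, b, c be positive integers with gcd(a, b, c) = 1. If abc divides a² + b² + c², then a, b, c are pairwise coprime, i.e., gcd(a,b) = gcd(b,c) = gcd(c,a) = 1. -/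
lemma aux_pc (a b c : ℕ) (h1 : Nat.gcd a (Nat.gcd b c) = 1)
    (hdvd : a * b * c ∣ a ^ 2 + b ^ 2 + c ^ 2) : Nat.gcd a b = 1 := by
  by_contra h
  obtain ⟨p, hp, hpd⟩ := Nat.exists_prime_and_dvd h
  have hpa : p ∣ a := hpd.trans (Nat.gcd_dvd_left _ _)
  have hpb : p ∣ b := hpd.trans (Nat.gcd_dvd_right _ _)
  have hsum : p ∣ a ^ 2 + b ^ 2 + c ^ 2 :=
    dvd_trans (Dvd.dvd.mul_right (Dvd.dvd.mul_right hpa b) c) hdvd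
  have hab2 : p ∣ a ^ 2 + b ^ 2 := dvd_add (hpa.pow two_ne_zero) (hpb.pow two_ne_zero)
  have hc2 : p ∣ c ^ 2 := by
    have := Nat.dvd_sub hsum hab2
    simpa using this
  have hpc : p ∣ c := hp.dvd_of_dvd_pow hc2
  have : p ∣ 1 := h1 ▸ Nat.dvd_gcd hpa (Nat.dvd_gcd hpb hpc)
  exact hp.one_lt.ne' (Nat.dvd_one.mp this)

theorem pairwise_coprime_of_dvd (a b c : ℕ) (ha : 0 < a) (hb : 0 < b) (hc : 0 < c)
    (hgcd : Nat.gcd a (Nat.gcd b c) = 1) (hdvd : a * b * c ∣ a ^ 2 + b ^ 2 + c ^ 2) :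
    Nat.gcd a b = 1 ∧ Nat.gcd b c = 1 ∧ Nat.gcd c a = 1 := by
  have h1 : Nat.gcd b (Nat.gcd c a) = 1 := by
    rw [Nat.gcd_comm c a, ← Nat.gcd_assoc, Nat.gcd_comm b a, Nat.gcd_assoc]; exact hgcd
  have h2 : Nat.gcd c (Nat.gcd a b) = 1 := by
    rw [← Nat.gcd_assoc, Nat.gcd_comm c a, Nat.gcd_assoc]
    rw [Nat.gcd_comm c b]; exact hgcd
  have d1 : b * c * a ∣ b ^ 2 + c ^ 2 + a ^ 2 := by
    have : b * c * a = a * b * c := by ring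
    rw [this]; convert hdvd using 1; ring
  have d2 : c * a * b ∣ c ^ 2 + a ^ 2 + b ^ 2 := by
    have : c * a * b = a * b * c := by ring
    rw [this]; convert hdvd using 1; ring
  exact ⟨aux_pc a b c hgcd hdvd, aux_pc b c a h1 d1, aux_pc c a b h2 d2⟩
end

section
/- Let a be a positive integer and b, c integers with gcd(a, b) = 1 and gcd(a, c) = 1. Define the Dedekind–Rademacher sum D(a; b, c) := (1/a) · Σ_{k=1}^{a−1} cot(πbk/a) · cot(πck/a) (a real number). Then D(a; b, c) = 0 if and only if a divides b² + c². -/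
/-!
Writing `((t))` for Dedekind's sawtooth and `e(x) = exp (2πi x / a)` for `x : ZMod a`, the finite
Fourier expansion `cot (π m / a) = 2i ∑ₓ ((x/a)) e(m x)` and orthogonality of the characters
turn `D(a; b, c)` into `-4 s(u, a)`, where `u = -b / c` in `ZMod a` and
`s(u, a) = ∑ₓ ((x/a)) ((u x/a))` is the classical Dedekind sum.
If `u² = -1`, substituting `x ↦ u x` and using that `((·))` is odd shows `s(u, a) = -s(u, a)`.
Conversely, since `x ↦ u x` permutes `ZMod a`, expanding `∑ₓ (u x mod a)² = ∑ₓ x²` yields the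
congruence `12 u a s(u, a) ≡ u² + 1 (mod a)`, so `s(u, a) = 0` forces `u² = -1`.
Finally `u² = -1` if and only if `b² + c² = 0` in `ZMod a`.
-/

open Real Finset

/-- The Dedekind–Rademacher sum
`D(a; b, c) = (1/a) · Σ_{k=1}^{a−1} cot(πbk/a) · cot(πck/a)`. -/
noncomputable def dedekindRademacherSum (a : ℕ) (b c : ℤ) : ℝ :=
  (1 / (a : ℝ)) * ∑ k ∈ Finset.Ico 1 a,
    Real.cot (Real.pi * b * k / a) * Real.cot (Real.pi * c * k / a)

theorem sub_one_mul_sum_range_natCast_mul_pow {R : Type*} [CommRing R] (ω : R) (n : ℕ) :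
    (ω - 1) * ∑ j ∈ range n, (j : R) * ω ^ j = n * ω ^ n - ω * ∑ j ∈ range n, ω ^ j := by
  induction n with
  | zero => simp
  | succ n ih =>
    simp only [sum_range_succ, mul_add, ih]
    push_cast
    ring

theorem six_mul_sum_range_sq (n : ℕ) :
    6 * ∑ j ∈ range n, (j : ℤ) ^ 2 = n * (n - 1) * (2 * n - 1) := by
  induction n with
  | zero => simp
  | succ n ih =>
    rw [sum_range_succ, mul_add, ih]
    push_cast
    ring

theorem sq_eq_neg_one_iff_sq_add_sq_eq_zero {R : Type*} [CommRing R] {b c u : R} (hc : IsUnit c)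
    (hu : u * c = -b) : u ^ 2 = -1 ↔ b ^ 2 + c ^ 2 = 0 := by
  rw [show b ^ 2 + c ^ 2 = c ^ 2 * (u ^ 2 + 1) by linear_combination (b - u * c) * hu,
    (hc.pow 2).mul_right_eq_zero, add_eq_zero_iff_eq_neg]

namespace ZMod

variable {a : ℕ} [NeZero a]

theorem sum_univ_val_eq_sum_range {M : Type*} [AddCommMonoid M] (f : ℕ → M) :
    ∑ x : ZMod a, f x.val = ∑ j ∈ range a, f j := by
  obtain ⟨n, rfl⟩ := Nat.exists_eq_succ_of_ne_zero (NeZero.ne a)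
  exact Fin.sum_univ_eq_sum_range f _

theorem two_mul_sum_val : 2 * ∑ x : ZMod a, (x.val : ℤ) = a * (a - 1) := by
  rw [sum_univ_val_eq_sum_range (a := a) (fun j => (j : ℤ))]
  have h := sum_range_id_mul_two a
  zify [Nat.one_le_iff_ne_zero.mpr (NeZero.ne a)] at h
  linarith

theorem six_mul_sum_val_sq : 6 * ∑ x : ZMod a, (x.val : ℤ) ^ 2 = a * (a - 1) * (2 * a - 1) := by
  rw [sum_univ_val_eq_sum_range (a := a) (fun j => (j : ℤ) ^ 2), six_mul_sum_range_sq]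

theorem stdAddChar_intCast_mul (m : ℤ) (y : ZMod a) :
    stdAddChar ((m : ZMod a) * y) = stdAddChar (m : ZMod a) ^ y.val := by
  rw [← AddChar.map_nsmul_eq_pow, nsmul_eq_mul, natCast_val, cast_id', id, mul_comm]

theorem sum_stdAddChar_mul (n : ZMod a) :
    ∑ x : ZMod a, stdAddChar (x * n) = if n = 0 then (a : ℂ) else 0 := by
  rw [AddChar.sum_mulShift _ (isPrimitive_stdAddChar a), card]
  push_cast
  rfl

end ZMod

/-- `sawtooth a x = 2a · ((x / a))`, where `((t)) = t - ⌊t⌋ - 1/2` for `t ∉ ℤ` and `((t)) = 0` for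
`t ∈ ℤ` is Dedekind's sawtooth function. -/
def sawtooth (a : ℕ) (x : ZMod a) : ℤ := if x = 0 then 0 else 2 * x.val - a

/-- `scaledDedekindSum a u = 4a² · s(u, a)` for the Dedekind sum `s(u, a) = ∑ₓ ((x/a)) ((ux/a))`. -/
def scaledDedekindSum (a : ℕ) [NeZero a] (u : ZMod a) : ℤ :=
  ∑ x : ZMod a, sawtooth a x * sawtooth a (u * x)

section

variable {a : ℕ} [NeZero a]

theorem sawtooth_neg (x : ZMod a) : sawtooth a (-x) = -sawtooth a x := by
  by_cases hx : x = 0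
  · simp [sawtooth, hx]
  · simp only [sawtooth, neg_eq_zero, hx, if_false, ZMod.neg_val,
      Nat.cast_sub (ZMod.val_lt x).le]
    ring

theorem sum_sawtooth : ∑ x : ZMod a, sawtooth a x = 0 := by
  have h := Equiv.sum_comp (Equiv.neg (ZMod a)) (sawtooth a)
  simp only [Equiv.neg_apply, sawtooth_neg, sum_neg_distrib] at h
  linarith

theorem sub_one_mul_sum_sawtooth_mul_pow {R : Type*} [CommRing R] {ω : R} (hω : ω ^ a = 1)
    (hsum : ∑ j ∈ range a, ω ^ j = 0) :
    (ω - 1) * ∑ x : ZMod a, (sawtooth a x : R) * ω ^ x.val = a * (ω + 1) := by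
  have hsplit : ∀ x : ZMod a, (sawtooth a x : R) * ω ^ x.val =
      (2 * x.val - a) * ω ^ x.val + if x = 0 then (a : R) else 0 := by
    intro x
    by_cases hx : x = 0 <;> simp [sawtooth, hx]
  have hval : ∑ x : ZMod a, (2 * (x.val : R) - a) * ω ^ x.val =
      2 * ∑ j ∈ range a, (j : R) * ω ^ j - a * ∑ j ∈ range a, ω ^ j := by
    rw [ZMod.sum_univ_val_eq_sum_range (fun j => (2 * (j : R) - a) * ω ^ j), mul_sum, mul_sum,
      ← sum_sub_distrib]
    exact sum_congr rfl fun j _ => by ring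
  simp only [hsplit, sum_add_distrib, hval, Fintype.sum_ite_eq']
  linear_combination 2 * sub_one_mul_sum_range_natCast_mul_pow ω a +
    ((1 - ω) * a - 2 * ω) * hsum + 2 * a * hω

theorem cot_pi_mul_intCast_div_eq_sum_sawtooth (m : ℤ) :
    (Real.cot (π * m / a) : ℂ) =
      Complex.I / a * ∑ y : ZMod a, (sawtooth a y : ℂ) * ZMod.stdAddChar ((m : ZMod a) * y) := by
  simp only [ZMod.stdAddChar_intCast_mul]
  set ω := ZMod.stdAddChar (m : ZMod a) with hω
  by_cases hm : (m : ZMod a) = 0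
  -- Both sides vanish: Lean's `cot` is `0` at multiples of `π`, where `sin = 0`.
  · obtain ⟨n, rfl⟩ := (ZMod.intCast_zmod_eq_zero_iff_dvd m a).mp hm
    have hangle : π * ((a * n : ℤ) : ℝ) / a = n * π := by
      push_cast
      field_simp [NeZero.ne a]
    rw [hangle, Real.cot_eq_cos_div_sin, Real.sin_int_mul_pi, div_zero, hω, hm,
      AddChar.map_zero_eq_one]
    simp only [one_pow, mul_one, ← Int.cast_sum, sum_sawtooth]
    simp
  · have hω1 : ω ≠ 1 := by
      rw [← AddChar.map_zero_eq_one (ZMod.stdAddChar (N := a))]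
      exact ZMod.injective_stdAddChar.ne hm
    have hωa : ω ^ a = 1 := by
      rw [← AddChar.map_nsmul_eq_pow, nsmul_eq_mul, ZMod.natCast_self, zero_mul,
        AddChar.map_zero_eq_one]
    have hsum : ∑ j ∈ range a, ω ^ j = 0 := by
      rw [← ZMod.sum_univ_val_eq_sum_range (a := a) (ω ^ ·)]
      simp only [hω, ← ZMod.stdAddChar_intCast_mul, mul_comm (m : ZMod a),
        ZMod.sum_stdAddChar_mul, hm, if_false]
    have hcot : (Real.cot (π * m / a) : ℂ) = (ω + 1) / (Complex.I * (1 - ω)) := by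
      rw [Complex.ofReal_cot, hω, ZMod.stdAddChar_coe]
      push_cast
      rw [mul_div_assoc, Complex.cot_pi_eq_exp_ratio, mul_div_assoc]
    have hne : ω - 1 ≠ 0 := sub_ne_zero.mpr hω1
    have ha : (a : ℂ) ≠ 0 := NeZero.ne _
    rw [hcot, eq_div_of_mul_eq hne
      ((mul_comm _ _).trans (sub_one_mul_sum_sawtooth_mul_pow hωa hsum))]
    field_simp
    linear_combination -(ω + 1) * (1 - ω) * Complex.I_sq

theorem cot_mul_cot_eq_sum_sawtooth (b c : ℤ) (x : ZMod a) :
    ((Real.cot (π * b * x.val / a) * Real.cot (π * c * x.val / a) : ℝ) : ℂ) =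
      -(1 / a ^ 2) * ∑ y : ZMod a, ∑ z : ZMod a, (sawtooth a y * sawtooth a z : ℂ) *
        ZMod.stdAddChar (x * ((b : ZMod a) * y + (c : ZMod a) * z)) := by
  have hcot : ∀ d : ℤ, (Real.cot (π * d * x.val / a) : ℂ) = Complex.I / a *
      ∑ y : ZMod a, (sawtooth a y : ℂ) * ZMod.stdAddChar (x * ((d : ZMod a) * y)) := by
    intro d
    rw [show π * d * x.val / a = π * ((d * x.val : ℤ) : ℝ) / a by push_cast; ring,
      cot_pi_mul_intCast_div_eq_sum_sawtooth]
    push_cast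
    simp only [ZMod.natCast_val, ZMod.cast_id', id, mul_left_comm x, mul_assoc]
  have hI : Complex.I / a * (Complex.I / a) = -(1 / (a : ℂ) ^ 2) := by
    rw [div_mul_div_comm, Complex.I_mul_I]
    ring
  rw [Complex.ofReal_mul, hcot b, hcot c, mul_mul_mul_comm, sum_mul_sum, hI]
  congr 1
  refine sum_congr rfl fun y _ => sum_congr rfl fun z _ => ?_
  rw [mul_add, AddChar.map_add_eq_mul]
  ring

theorem sum_cot_mul_cot_eq_sum_sawtooth (b c : ℤ) :
    ∑ k ∈ Ico 1 a, Real.cot (π * b * k / a) * Real.cot (π * c * k / a) =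
      -(1 / a) * ((∑ y : ZMod a, ∑ z : ZMod a,
        if (b : ZMod a) * y + c * z = 0 then sawtooth a y * sawtooth a z else 0 : ℤ) : ℝ) := by
  let f (k : ℕ) : ℝ := Real.cot (π * b * k / a) * Real.cot (π * c * k / a)
  have hcot_zero : Real.cot 0 = 0 := by simp [Real.cot_eq_cos_div_sin]
  have hrange := sum_range_eq_add_Ico f (Nat.pos_of_neZero a)
  simp only [f, Nat.cast_zero, mul_zero, zero_div, hcot_zero, zero_add] at hrange
  rw [← hrange, ← ZMod.sum_univ_val_eq_sum_range f]
  apply Complex.ofReal_injective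
  rw [Complex.ofReal_sum]
  simp only [f, cot_mul_cot_eq_sum_sawtooth]
  rw [← mul_sum, sum_comm, sum_congr rfl fun y _ => sum_comm]
  simp only [← mul_sum, ZMod.sum_stdAddChar_mul]
  push_cast
  simp only [mul_sum]
  refine sum_congr rfl fun y _ => sum_congr rfl fun z _ => ?_
  split_ifs
  · field_simp
    push_cast
    ring
  · simp

theorem sum_sum_ite_sawtooth_eq_scaledDedekindSum {b c u : ZMod a} (hc : IsUnit c)
    (hu : u * c = -b) :
    ∑ y : ZMod a, ∑ z : ZMod a,
      (if b * y + c * z = 0 then sawtooth a y * sawtooth a z else 0) = scaledDedekindSum a u := by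
  refine sum_congr rfl fun y _ => ?_
  have hcond : ∀ z, b * y + c * z = 0 ↔ u * y = z := by
    intro z
    rw [show b * y + c * z = c * (z - u * y) by linear_combination y * hu,
      hc.mul_right_eq_zero, sub_eq_zero, eq_comm]
  simp only [hcond, sum_ite_eq, mem_univ, if_true]

theorem scaledDedekindSum_eq_zero_of_sq_eq_neg_one {u : ZMod a} (h : u ^ 2 = -1) :
    scaledDedekindSum a u = 0 := by
  have hu : IsUnit u := IsUnit.of_mul_eq_one (-u) (by linear_combination -h)
  have hsymm := Equiv.sum_comp hu.unit.mulLeft fun x => sawtooth a x * sawtooth a (u * x)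
  have hterm : ∀ x : ZMod a, sawtooth a (u * x) * sawtooth a (u * (u * x)) =
      -(sawtooth a x * sawtooth a (u * x)) := fun x => by
    rw [show u * (u * x) = -x by linear_combination x * h, sawtooth_neg]
    ring
  simp only [Units.mulLeft_apply, IsUnit.unit_spec, hterm, sum_neg_distrib] at hsymm
  unfold scaledDedekindSum
  linarith

theorem scaledDedekindSum_eq_four_mul_sum_val_mul_val_sub {u : ZMod a} (hu : IsUnit u) :
    scaledDedekindSum a u = 4 * ∑ x : ZMod a, (x.val : ℤ) * (u * x).val - a ^ 2 * (a - 1) := by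
  have hterm : ∀ x : ZMod a, sawtooth a x * sawtooth a (u * x) =
      4 * (x.val * (u * x).val) - 2 * a * x.val - 2 * a * (u * x).val + a ^ 2 -
        if x = 0 then (a : ℤ) ^ 2 else 0 := by
    intro x
    by_cases hx : x = 0
    · simp [sawtooth, hx]
    · have hux : u * x ≠ 0 := by rwa [Ne, hu.mul_right_eq_zero]
      simp only [sawtooth, hx, hux, if_false]
      ring
  have hperm : ∑ x : ZMod a, ((u * x).val : ℤ) = ∑ x : ZMod a, (x.val : ℤ) :=
    Equiv.sum_comp hu.unit.mulLeft fun x : ZMod a => (x.val : ℤ)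
  simp only [scaledDedekindSum, hterm, sum_sub_distrib, sum_add_distrib, ← mul_sum, hperm,
    Fintype.sum_ite_eq', sum_const, card_univ, ZMod.card, nsmul_eq_mul]
  linear_combination (-2 * (a : ℤ)) * ZMod.two_mul_sum_val (a := a)

/-- The congruence `12 u a s(u, a) ≡ u² + 1 (mod a)` for Dedekind sums. -/
theorem sq_dvd_three_mul_val_mul_scaledDedekindSum_sub {u : ZMod a} (hu : IsUnit u) :
    (a : ℤ) ^ 2 ∣ 3 * u.val * scaledDedekindSum a u - a * (u.val ^ 2 + 1) := by
  set H : ℤ := (u.val : ℤ)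
  set q : ZMod a → ℤ := fun x => H * x.val / a
  have hdiv : ∀ x : ZMod a, ((u * x).val : ℤ) = H * x.val - a * q x := by
    intro x
    rw [ZMod.val_mul]
    push_cast
    exact Int.emod_def _ _
  have hsq : ∑ x : ZMod a, ((u * x).val : ℤ) ^ 2 = ∑ x : ZMod a, (x.val : ℤ) ^ 2 :=
    Equiv.sum_comp hu.unit.mulLeft fun x : ZMod a => (x.val : ℤ) ^ 2
  have hT : ∑ x : ZMod a, (x.val : ℤ) * (u * x).val =
      H * ∑ x : ZMod a, (x.val : ℤ) ^ 2 - a * ∑ x : ZMod a, x.val * q x := by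
    rw [mul_sum, mul_sum, ← sum_sub_distrib]
    exact sum_congr rfl fun x _ => by rw [hdiv]; ring
  have hS2 : ∑ x : ZMod a, (x.val : ℤ) ^ 2 = H ^ 2 * ∑ x : ZMod a, (x.val : ℤ) ^ 2 -
      2 * a * H * ∑ x : ZMod a, x.val * q x + a ^ 2 * ∑ x : ZMod a, q x ^ 2 := by
    conv_lhs => rw [← hsq]
    rw [mul_sum, mul_sum, mul_sum, ← sum_sub_distrib, ← sum_add_distrib]
    exact sum_congr rfl fun x _ => by rw [hdiv]; ring
  rw [scaledDedekindSum_eq_four_mul_sum_val_mul_val_sub hu, hT]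
  exact ⟨(H ^ 2 + 1) * (2 * a - 3) - 6 * ∑ x : ZMod a, q x ^ 2 - 3 * H * (a - 1),
    by linear_combination (-6) * hS2 + (H ^ 2 + 1) * ZMod.six_mul_sum_val_sq (a := a)⟩

theorem scaledDedekindSum_eq_zero_iff {u : ZMod a} (hu : IsUnit u) :
    scaledDedekindSum a u = 0 ↔ u ^ 2 = -1 := by
  refine ⟨fun h => ?_, scaledDedekindSum_eq_zero_of_sq_eq_neg_one⟩
  have hdvd := sq_dvd_three_mul_val_mul_scaledDedekindSum_sub hu
  rw [h, mul_zero, zero_sub, dvd_neg, sq,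
    mul_dvd_mul_iff_left (Nat.cast_ne_zero.mpr (NeZero.ne a))] at hdvd
  have hmod := (ZMod.intCast_zmod_eq_zero_iff_dvd _ a).mpr hdvd
  push_cast at hmod
  rw [ZMod.natCast_zmod_val] at hmod
  exact eq_neg_of_add_eq_zero_left hmod

end

theorem dedekindRademacherSum_eq_zero_iff (a : ℕ) (ha : 0 < a) (b c : ℤ)
    (hab : IsCoprime (a : ℤ) b) (hac : IsCoprime (a : ℤ) c) :
    dedekindRademacherSum a b c = 0 ↔ (a : ℤ) ∣ b ^ 2 + c ^ 2 := by
  have : NeZero a := ⟨ha.ne'⟩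
  have hb : IsUnit (b : ZMod a) := (ZMod.coe_int_isUnit_iff_isCoprime b a).mpr hab
  have hc : IsUnit (c : ZMod a) := (ZMod.coe_int_isUnit_iff_isCoprime c a).mpr hac
  obtain ⟨u, hu⟩ : ∃ u : ZMod a, u * c = -b := ⟨-b * ↑hc.unit⁻¹, by simp [mul_assoc]⟩
  have hu_unit : IsUnit u := isUnit_of_mul_isUnit_left (hu ▸ hb.neg)
  rw [dedekindRademacherSum, sum_cot_mul_cot_eq_sum_sawtooth,
    sum_sum_ite_sawtooth_eq_scaledDedekindSum hc hu, ← ZMod.intCast_zmod_eq_zero_iff_dvd]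
  push_cast
  rw [← sq_eq_neg_one_iff_sq_add_sq_eq_zero hc hu, ← scaledDedekindSum_eq_zero_iff hu_unit]
  simp [ha.ne']
end
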